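/- Uniqueness part of Theorem 2.2: let p, q : ℝ × ℝ → ℝ be continuously differentiable, and let f₁, f₂ : ℝ × ℝ² → ℂ be smooth solutions of equation (2.10): ∂f/∂t = ∂³f/∂x³ + ∂³f/∂y³ + q(x,t)·∂f/∂x + (1/2)·(∂q/∂x)(x,t)·f + p(y,t)·∂f/∂y + (1/2)·(∂p/∂y)(y,t)·f, each vanishing outside a compact subset of ℝ² in the variables (x,y), uniformly in t. If f₁(0,x,y) = f₂(0,x,y) for all (x,y) ∈ ℝ², then f₁ = f₂ on ℝ × ℝ². -/

import Mathlib

open MeasureTheory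

/-- `∂_x` : partial derivative in the first variable. -/
noncomputable def dX (g : ℝ × ℝ → ℂ) : ℝ × ℝ → ℂ :=
  fun z => deriv (fun x => g (x, z.2)) z.1

/-- `∂_y` : partial derivative in the second variable. -/
noncomputable def dY (g : ℝ × ℝ → ℂ) : ℝ × ℝ → ℂ :=
  fun z => deriv (fun y => g (z.1, y)) z.2

/-- `f` is a smooth solution of the linear evolution equation (2.10), vanishing outside a
compact subset of ℝ² in `(x,y)`, uniformly in `t`. -/
def IsSolution_2_10 (p q : ℝ × ℝ → ℝ) (f : ℝ → ℝ × ℝ → ℂ) : Prop :=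
  ContDiff ℝ (⊤ : ℕ∞) (fun w : ℝ × (ℝ × ℝ) => f w.1 w.2) ∧
  (∃ K : Set (ℝ × ℝ), IsCompact K ∧ ∀ t : ℝ, ∀ z : ℝ × ℝ, z ∉ K → f t z = 0) ∧
  ∀ t : ℝ, ∀ z : ℝ × ℝ,
    deriv (fun τ => f τ z) t
      = dX (dX (dX (f t))) z + dY (dY (dY (f t))) z
        + (q (z.1, t) : ℂ) * dX (f t) z
        + (1 / 2 : ℂ) * ((deriv (fun x => q (x, t)) z.1 : ℝ) : ℂ) * f t z
        + (p (z.2, t) : ℂ) * dY (f t) z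
        + (1 / 2 : ℂ) * ((deriv (fun y => p (y, t)) z.2 : ℝ) : ℂ) * f t z

/-! ### Auxiliary infrastructure -/

/-- Directional derivative operator on functions of `(t,(x,y))`. -/
noncomputable def Dv (v : ℝ × (ℝ × ℝ)) (G : ℝ × (ℝ × ℝ) → ℂ) : ℝ × (ℝ × ℝ) → ℂ :=
  fun w => fderiv ℝ G w v

def vT : ℝ × (ℝ × ℝ) := (1,(0,0))
def vX : ℝ × (ℝ × ℝ) := (0,(1,0))
def vY : ℝ × (ℝ × ℝ) := (0,(0,1))

theorem Dv_contDiff {G : ℝ × (ℝ × ℝ) → ℂ} (hG : ContDiff ℝ (⊤ : ℕ∞) G) (v : ℝ × (ℝ × ℝ)) :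
    ContDiff ℝ (⊤ : ℕ∞) (Dv v G) :=
  (ContinuousLinearMap.apply ℝ ℂ v).contDiff.comp (hG.fderiv_right (by simp))

theorem hasDerivAt_sectX {H : ℝ × (ℝ × ℝ) → ℂ} {t x y : ℝ}
    (hH : DifferentiableAt ℝ H (t,(x,y))) :
    HasDerivAt (fun x' => H (t,(x',y))) (Dv vX H (t,(x,y))) x := by
  have hl : HasDerivAt (fun x' : ℝ => ((t,(x',y)) : ℝ×(ℝ×ℝ))) vX x :=
    HasDerivAt.prodMk (hasDerivAt_const x t) (HasDerivAt.prodMk (hasDerivAt_id x) (hasDerivAt_const x y))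
  exact hH.hasFDerivAt.comp_hasDerivAt x hl

theorem hasDerivAt_sectY {H : ℝ × (ℝ × ℝ) → ℂ} {t x y : ℝ}
    (hH : DifferentiableAt ℝ H (t,(x,y))) :
    HasDerivAt (fun y' => H (t,(x,y'))) (Dv vY H (t,(x,y))) y := by
  have hl : HasDerivAt (fun y' : ℝ => ((t,(x,y')) : ℝ×(ℝ×ℝ))) vY y :=
    HasDerivAt.prodMk (hasDerivAt_const y t) (HasDerivAt.prodMk (hasDerivAt_const y x) (hasDerivAt_id y))
  exact hH.hasFDerivAt.comp_hasDerivAt y hl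

theorem hasDerivAt_sectT {H : ℝ × (ℝ × ℝ) → ℂ} {t x y : ℝ}
    (hH : DifferentiableAt ℝ H (t,(x,y))) :
    HasDerivAt (fun τ => H (τ,(x,y))) (Dv vT H (t,(x,y))) t := by
  have hl : HasDerivAt (fun τ : ℝ => ((τ,(x,y)) : ℝ×(ℝ×ℝ))) vT t :=
    HasDerivAt.prodMk (hasDerivAt_id t) (HasDerivAt.prodMk (hasDerivAt_const t x) (hasDerivAt_const t y))
  exact hH.hasFDerivAt.comp_hasDerivAt t hl

theorem hasDerivAt_sectQ {q : ℝ × ℝ → ℝ} (hq : ContDiff ℝ 1 q) (a t : ℝ) :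
    HasDerivAt (fun x => q (x, t)) (fderiv ℝ q (a,t) (1,0)) a := by
  have hl : HasDerivAt (fun x : ℝ => ((x,t) : ℝ×ℝ)) ((1,0) : ℝ×ℝ) a :=
    HasDerivAt.prodMk (hasDerivAt_id a) (hasDerivAt_const a t)
  exact (hq.differentiable one_ne_zero (a,t)).hasFDerivAt.comp_hasDerivAt a hl

theorem deriv_sectQ {q : ℝ × ℝ → ℝ} (hq : ContDiff ℝ 1 q) (a t : ℝ) :
    deriv (fun x => q (x, t)) a = fderiv ℝ q (a,t) (1,0) :=
  (hasDerivAt_sectQ hq a t).deriv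

theorem Dv_vanish {H : ℝ × (ℝ × ℝ) → ℂ} {K : Set (ℝ × ℝ)} (hK : IsClosed K)
    (hH : ∀ t : ℝ, ∀ z : ℝ × ℝ, z ∉ K → H (t, z) = 0) (v : ℝ × (ℝ × ℝ)) :
    ∀ t : ℝ, ∀ z : ℝ × ℝ, z ∉ K → Dv v H (t, z) = 0 := by
  intro t z hz
  have hmem : ((t,z) : ℝ×(ℝ×ℝ)) ∈ (Set.univ ×ˢ Kᶜ : Set (ℝ×(ℝ×ℝ))) := by simp [hz]
  have hopen : IsOpen (Set.univ ×ˢ Kᶜ : Set (ℝ×(ℝ×ℝ))) := isOpen_univ.prod hK.isOpen_compl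
  have hEq : H =ᶠ[nhds ((t,z) : ℝ×(ℝ×ℝ))] (fun _ => 0) := by
    filter_upwards [hopen.mem_nhds hmem] with w hw
    exact hH w.1 w.2 hw.2
  have : fderiv ℝ H (t,z) = fderiv ℝ (fun _ : ℝ×(ℝ×ℝ) => (0:ℂ)) (t,z) := hEq.fderiv_eq
  simp [Dv, this]

theorem Dv_sub {G₁ G₂ : ℝ × (ℝ × ℝ) → ℂ} (h₁ : ContDiff ℝ (⊤ : ℕ∞) G₁) (h₂ : ContDiff ℝ (⊤ : ℕ∞) G₂)
    (v : ℝ × (ℝ × ℝ)) :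
    Dv v (fun w => G₁ w - G₂ w) = fun w => Dv v G₁ w - Dv v G₂ w := by
  funext w
  simp only [Dv]
  rw [fderiv_fun_sub (h₁.differentiable (by simp) w) (h₂.differentiable (by simp) w)]
  rfl

theorem dX_eq {f : ℝ → ℝ × ℝ → ℂ} (hsm : ContDiff ℝ (⊤ : ℕ∞) (fun w : ℝ × (ℝ × ℝ) => f w.1 w.2))
    (t : ℝ) : dX (f t) = fun z => Dv vX (fun w : ℝ × (ℝ × ℝ) => f w.1 w.2) (t, z) := by
  funext z
  obtain ⟨zx, zy⟩ := z
  exact (hasDerivAt_sectX (hsm.differentiable (by simp) _)).deriv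

theorem dY_eq {f : ℝ → ℝ × ℝ → ℂ} (hsm : ContDiff ℝ (⊤ : ℕ∞) (fun w : ℝ × (ℝ × ℝ) => f w.1 w.2))
    (t : ℝ) : dY (f t) = fun z => Dv vY (fun w : ℝ × (ℝ × ℝ) => f w.1 w.2) (t, z) := by
  funext z
  obtain ⟨zx, zy⟩ := z
  exact (hasDerivAt_sectY (hsm.differentiable (by simp) _)).deriv

theorem dX_eq' {H : ℝ × (ℝ × ℝ) → ℂ} (hH : ContDiff ℝ (⊤ : ℕ∞) H) (t : ℝ) :
    dX (fun z => H (t, z)) = fun z => Dv vX H (t, z) := by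
  funext z
  obtain ⟨zx, zy⟩ := z
  exact (hasDerivAt_sectX (hH.differentiable (by simp) _)).deriv

theorem dY_eq' {H : ℝ × (ℝ × ℝ) → ℂ} (hH : ContDiff ℝ (⊤ : ℕ∞) H) (t : ℝ) :
    dY (fun z => H (t, z)) = fun z => Dv vY H (t, z) := by
  funext z
  obtain ⟨zx, zy⟩ := z
  exact (hasDerivAt_sectY (hH.differentiable (by simp) _)).deriv

/-- Translation of the PDE (2.10) into directional-derivative form. -/
theorem sol_translate {p q : ℝ × ℝ → ℝ} (hp : ContDiff ℝ 1 p) (hq : ContDiff ℝ 1 q)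
    {f : ℝ → ℝ × ℝ → ℂ} (hf : IsSolution_2_10 p q f) :
    ∀ w : ℝ × (ℝ × ℝ),
      Dv vT (fun w : ℝ × (ℝ × ℝ) => f w.1 w.2) w
        = Dv vX (Dv vX (Dv vX (fun w : ℝ × (ℝ × ℝ) => f w.1 w.2))) w
          + Dv vY (Dv vY (Dv vY (fun w : ℝ × (ℝ × ℝ) => f w.1 w.2))) w
          + (q (w.2.1, w.1) : ℂ) * Dv vX (fun w : ℝ × (ℝ × ℝ) => f w.1 w.2) w
          + (1 / 2 : ℂ) * ((fderiv ℝ q (w.2.1, w.1) (1,0) : ℝ) : ℂ) * f w.1 w.2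
          + (p (w.2.2, w.1) : ℂ) * Dv vY (fun w : ℝ × (ℝ × ℝ) => f w.1 w.2) w
          + (1 / 2 : ℂ) * ((fderiv ℝ p (w.2.2, w.1) (1,0) : ℝ) : ℂ) * f w.1 w.2 := by
  obtain ⟨hsm, -, heq⟩ := hf
  rintro ⟨t, x, y⟩
  set G := (fun w : ℝ × (ℝ × ℝ) => f w.1 w.2) with hG
  have h := heq t (x, y)
  have hT : deriv (fun τ => f τ (x,y)) t = Dv vT G (t,(x,y)) :=
    (hasDerivAt_sectT (hsm.differentiable (by simp) _)).deriv
  have h1 : dX (f t) = fun z => Dv vX G (t, z) := dX_eq hsm t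
  have h1y : dY (f t) = fun z => Dv vY G (t, z) := dY_eq hsm t
  have h2 : dX (dX (f t)) = fun z => Dv vX (Dv vX G) (t, z) := by
    rw [h1]; exact dX_eq' (Dv_contDiff hsm vX) t
  have h2y : dY (dY (f t)) = fun z => Dv vY (Dv vY G) (t, z) := by
    rw [h1y]; exact dY_eq' (Dv_contDiff hsm vY) t
  have h3 : dX (dX (dX (f t))) = fun z => Dv vX (Dv vX (Dv vX G)) (t, z) := by
    rw [h2]; exact dX_eq' (Dv_contDiff (Dv_contDiff hsm vX) vX) t
  have h3y : dY (dY (dY (f t))) = fun z => Dv vY (Dv vY (Dv vY G)) (t, z) := by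
    rw [h2y]; exact dY_eq' (Dv_contDiff (Dv_contDiff hsm vY) vY) t
  rw [hT, h3, h3y, h1, h1y, deriv_sectQ hq, deriv_sectQ hp] at h
  exact h

/-! ### The energy method ingredients -/

theorem integral_deriv_zero {h h' : ℝ → ℝ} {a b : ℝ}
    (hd : ∀ x, HasDerivAt h (h' x) x) (hc : Continuous h')
    (hs : ∀ x, x ∉ Set.Ioo a b → h x = 0)
    (hs' : ∀ x, x ∉ Set.Ioo a b → h' x = 0) :
    ∫ x, h' x = 0 := by
  have hsupp : Function.support h' ⊆ Set.Ioc a b := by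
    intro x hx
    by_contra hmem
    exact hx (hs' x (fun hIoo => hmem ⟨hIoo.1, hIoo.2.le⟩))
  rw [← intervalIntegral.integral_eq_integral_of_support_subset hsupp]
  rw [intervalIntegral.integral_eq_sub_of_hasDerivAt (fun x _ => hd x)
    (hc.intervalIntegrable a b)]
  rw [hs b (by simp), hs a (by simp [le_refl]), sub_zero]

/-- The time-derivative integrand for the energy. -/
noncomputable def Wf (G : ℝ×(ℝ×ℝ)→ℂ) : ℝ×(ℝ×ℝ) → ℝ :=
  fun w => 2*((starRingEnd ℂ) (G w) * Dv vT G w).re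

/-- The flux in the `x` direction. -/
noncomputable def FX (q : ℝ×ℝ→ℝ) (G : ℝ×(ℝ×ℝ)→ℂ) : ℝ×(ℝ×ℝ) → ℝ :=
  fun w => 2*((starRingEnd ℂ) (G w) * Dv vX (Dv vX G) w).re
    - Complex.normSq (Dv vX G w) + q (w.2.1, w.1) * Complex.normSq (G w)

noncomputable def PX (q : ℝ×ℝ→ℝ) (G : ℝ×(ℝ×ℝ)→ℂ) : ℝ×(ℝ×ℝ) → ℝ :=
  fun w => 2*((starRingEnd ℂ) (G w) * (Dv vX (Dv vX (Dv vX G)) w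
      + (q (w.2.1,w.1):ℂ) * Dv vX G w
      + (1/2:ℂ)*((fderiv ℝ q (w.2.1,w.1) (1,0) : ℝ):ℂ) * G w)).re

/-- The flux in the `y` direction. -/
noncomputable def FY (p : ℝ×ℝ→ℝ) (G : ℝ×(ℝ×ℝ)→ℂ) : ℝ×(ℝ×ℝ) → ℝ :=
  fun w => 2*((starRingEnd ℂ) (G w) * Dv vY (Dv vY G) w).re
    - Complex.normSq (Dv vY G w) + p (w.2.2, w.1) * Complex.normSq (G w)

noncomputable def PY (p : ℝ×ℝ→ℝ) (G : ℝ×(ℝ×ℝ)→ℂ) : ℝ×(ℝ×ℝ) → ℝ :=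
  fun w => 2*((starRingEnd ℂ) (G w) * (Dv vY (Dv vY (Dv vY G)) w
      + (p (w.2.2,w.1):ℂ) * Dv vY G w
      + (1/2:ℂ)*((fderiv ℝ p (w.2.2,w.1) (1,0) : ℝ):ℂ) * G w)).re

theorem hasDerivAt_FX {G : ℝ×(ℝ×ℝ)→ℂ} (hsm : ContDiff ℝ (⊤ : ℕ∞) G) {q : ℝ×ℝ→ℝ}
    (hq : ContDiff ℝ 1 q) (t x y : ℝ) :
    HasDerivAt (fun x' => FX q G (t,(x',y))) (PX q G (t,(x,y))) x := by
  simp only [FX, PX]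
  have d0 := hasDerivAt_sectX (hsm.differentiable (by simp) (t,(x,y)))
  have d1 := hasDerivAt_sectX ((Dv_contDiff hsm vX).differentiable (by simp) (t,(x,y)))
  have d2 := hasDerivAt_sectX ((Dv_contDiff (Dv_contDiff hsm vX) vX).differentiable (by simp) (t,(x,y)))
  have dq := hasDerivAt_sectQ hq x t
  have hre : ∀ {u : ℝ → ℂ} {u' : ℂ}, HasDerivAt u u' x →
      HasDerivAt (fun s => (u s).re) u'.re x := fun h =>
    Complex.reCLM.hasFDerivAt.comp_hasDerivAt x h
  have hfun : (fun x' => 2*((starRingEnd ℂ) (G (t,(x',y))) * Dv vX (Dv vX G) (t,(x',y))).re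
        - Complex.normSq (Dv vX G (t,(x',y))) + q (x',t) * Complex.normSq (G (t,(x',y))))
      = (fun x' => 2*((star (G (t,(x',y))) * Dv vX (Dv vX G) (t,(x',y))).re)
        - (star (Dv vX G (t,(x',y))) * Dv vX G (t,(x',y))).re
        + q (x',t) * ((star (G (t,(x',y))) * G (t,(x',y))).re)) := by
    funext x'
    simp only [Complex.star_def, Complex.normSq_apply, Complex.mul_re,
      Complex.conj_re, Complex.conj_im]
    ring
  rw [hfun]
  have T1 := (hre (d0.star.mul d2)).const_mul (2:ℝ)
  have T2 := hre (d1.star.mul d1)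
  have T3 := dq.mul (hre (d0.star.mul d0))
  have D := (T1.sub T2).add T3
  convert D using 1
  · rfl
  · rfl
  · rfl
  simp only [Complex.star_def, Complex.mul_re, Complex.add_re, Complex.conj_re,
    Complex.conj_im, Complex.ofReal_re, Complex.ofReal_im, Complex.add_im,
    Complex.mul_im]
  norm_num
  ring

theorem hasDerivAt_FY {G : ℝ×(ℝ×ℝ)→ℂ} (hsm : ContDiff ℝ (⊤ : ℕ∞) G) {p : ℝ×ℝ→ℝ}
    (hp : ContDiff ℝ 1 p) (t x y : ℝ) :
    HasDerivAt (fun y' => FY p G (t,(x,y'))) (PY p G (t,(x,y))) y := by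
  simp only [FY, PY]
  have d0 := hasDerivAt_sectY (hsm.differentiable (by simp) (t,(x,y)))
  have d1 := hasDerivAt_sectY ((Dv_contDiff hsm vY).differentiable (by simp) (t,(x,y)))
  have d2 := hasDerivAt_sectY ((Dv_contDiff (Dv_contDiff hsm vY) vY).differentiable (by simp) (t,(x,y)))
  have dp := hasDerivAt_sectQ hp y t
  have hre : ∀ {u : ℝ → ℂ} {u' : ℂ}, HasDerivAt u u' y →
      HasDerivAt (fun s => (u s).re) u'.re y := fun h =>
    Complex.reCLM.hasFDerivAt.comp_hasDerivAt y h
  have hfun : (fun y' => 2*((starRingEnd ℂ) (G (t,(x,y'))) * Dv vY (Dv vY G) (t,(x,y'))).re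
        - Complex.normSq (Dv vY G (t,(x,y'))) + p (y',t) * Complex.normSq (G (t,(x,y'))))
      = (fun y' => 2*((star (G (t,(x,y'))) * Dv vY (Dv vY G) (t,(x,y'))).re)
        - (star (Dv vY G (t,(x,y'))) * Dv vY G (t,(x,y'))).re
        + p (y',t) * ((star (G (t,(x,y'))) * G (t,(x,y'))).re)) := by
    funext y'
    simp only [Complex.star_def, Complex.normSq_apply, Complex.mul_re,
      Complex.conj_re, Complex.conj_im]
    ring
  rw [hfun]
  have T1 := (hre (d0.star.mul d2)).const_mul (2:ℝ)
  have T2 := hre (d1.star.mul d1)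
  have T3 := dp.mul (hre (d0.star.mul d0))
  have D := (T1.sub T2).add T3
  convert D using 1
  · rfl
  · rfl
  · rfl
  simp only [Complex.star_def, Complex.mul_re, Complex.add_re, Complex.conj_re,
    Complex.conj_im, Complex.ofReal_re, Complex.ofReal_im, Complex.add_im,
    Complex.mul_im]
  norm_num
  ring

theorem hasDerivAt_nsqT {G : ℝ×(ℝ×ℝ)→ℂ} (hsm : ContDiff ℝ (⊤ : ℕ∞) G) (t x y : ℝ) :
    HasDerivAt (fun τ => Complex.normSq (G (τ,(x,y)))) (Wf G (t,(x,y))) t := by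
  simp only [Wf]
  have d0 := hasDerivAt_sectT (hsm.differentiable (by simp) (t,(x,y)))
  have hre : ∀ {u : ℝ → ℂ} {u' : ℂ}, HasDerivAt u u' t →
      HasDerivAt (fun s => (u s).re) u'.re t := fun h =>
    Complex.reCLM.hasFDerivAt.comp_hasDerivAt t h
  have hfun : (fun τ => Complex.normSq (G (τ,(x,y))))
      = (fun τ => (star (G (τ,(x,y))) * G (τ,(x,y))).re) := by
    funext τ
    simp only [Complex.star_def, Complex.normSq_apply, Complex.mul_re,
      Complex.conj_re, Complex.conj_im]
    ring
  rw [hfun]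
  have D := hre (d0.star.mul d0)
  convert D using 1
  · rfl
  simp only [Complex.star_def, Complex.mul_re, Complex.add_re, Complex.conj_re,
    Complex.conj_im]
  ring

/-! ### The key uniqueness lemma -/

theorem key {p q : ℝ × ℝ → ℝ} (hp : ContDiff ℝ 1 p) (hq : ContDiff ℝ 1 q)
    {G : ℝ × (ℝ × ℝ) → ℂ} (hsm : ContDiff ℝ (⊤ : ℕ∞) G)
    {K : Set (ℝ × ℝ)} (hK : IsCompact K)
    (hsupp : ∀ t : ℝ, ∀ z : ℝ × ℝ, z ∉ K → G (t, z) = 0)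
    (hpde : ∀ w : ℝ × (ℝ × ℝ),
      Dv vT G w = Dv vX (Dv vX (Dv vX G)) w + Dv vY (Dv vY (Dv vY G)) w
        + (q (w.2.1, w.1) : ℂ) * Dv vX G w
        + (1 / 2 : ℂ) * ((fderiv ℝ q (w.2.1, w.1) (1,0) : ℝ) : ℂ) * G w
        + (p (w.2.2, w.1) : ℂ) * Dv vY G w
        + (1 / 2 : ℂ) * ((fderiv ℝ p (w.2.2, w.1) (1,0) : ℝ) : ℂ) * G w)
    (h0 : ∀ z : ℝ × ℝ, G (0, z) = 0) :
    ∀ t : ℝ, ∀ z : ℝ × ℝ, G (t, z) = 0 := by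
  -- continuity facts
  have cG := hsm.continuous
  have cA1 := (Dv_contDiff hsm vX).continuous
  have cA2 := (Dv_contDiff (Dv_contDiff hsm vX) vX).continuous
  have cA3 := (Dv_contDiff (Dv_contDiff (Dv_contDiff hsm vX) vX) vX).continuous
  have cB1 := (Dv_contDiff hsm vY).continuous
  have cB2 := (Dv_contDiff (Dv_contDiff hsm vY) vY).continuous
  have cB3 := (Dv_contDiff (Dv_contDiff (Dv_contDiff hsm vY) vY) vY).continuous
  have cT := (Dv_contDiff hsm vT).continuous
  have cprojq : Continuous (fun w : ℝ×(ℝ×ℝ) => ((w.2.1, w.1) : ℝ×ℝ)) := by fun_prop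
  have cprojp : Continuous (fun w : ℝ×(ℝ×ℝ) => ((w.2.2, w.1) : ℝ×ℝ)) := by fun_prop
  have cq : Continuous (fun w : ℝ×(ℝ×ℝ) => q (w.2.1, w.1)) := hq.continuous.comp cprojq
  have cp : Continuous (fun w : ℝ×(ℝ×ℝ) => p (w.2.2, w.1)) := hp.continuous.comp cprojp
  have cqx : Continuous (fun w : ℝ×(ℝ×ℝ) => fderiv ℝ q (w.2.1, w.1) ((1:ℝ),(0:ℝ))) :=
    (ContinuousLinearMap.apply ℝ ℝ ((1,0) : ℝ×ℝ)).continuous.comp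
      ((hq.continuous_fderiv one_ne_zero).comp cprojq)
  have cpx : Continuous (fun w : ℝ×(ℝ×ℝ) => fderiv ℝ p (w.2.2, w.1) ((1:ℝ),(0:ℝ))) :=
    (ContinuousLinearMap.apply ℝ ℝ ((1,0) : ℝ×ℝ)).continuous.comp
      ((hp.continuous_fderiv one_ne_zero).comp cprojp)
  have cconj : ∀ {u : ℝ×(ℝ×ℝ) → ℂ}, Continuous u →
      Continuous (fun w => (starRingEnd ℂ) (u w)) := fun hu => continuous_star.comp hu
  have cre : ∀ {u : ℝ×(ℝ×ℝ) → ℂ}, Continuous u →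
      Continuous (fun w => (u w).re) := fun hu => Complex.continuous_re.comp hu
  have cofR : ∀ {u : ℝ×(ℝ×ℝ) → ℝ}, Continuous u →
      Continuous (fun w => ((u w : ℝ) : ℂ)) := fun hu => Complex.continuous_ofReal.comp hu
  have cnsq : ∀ {u : ℝ×(ℝ×ℝ) → ℂ}, Continuous u →
      Continuous (fun w => Complex.normSq (u w)) := fun hu =>
    Complex.continuous_normSq.comp hu
  have cW : Continuous (Wf G) := by
    unfold Wf; exact continuous_const.mul (cre ((cconj cG).mul cT))
  have cPX : Continuous (PX q G) := by
    unfold PX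
    exact continuous_const.mul (cre ((cconj cG).mul
      ((cA3.add ((cofR cq).mul cA1)).add ((continuous_const.mul (cofR cqx)).mul cG))))
  have cPY : Continuous (PY p G) := by
    unfold PY
    exact continuous_const.mul (cre ((cconj cG).mul
      ((cB3.add ((cofR cp).mul cB1)).add ((continuous_const.mul (cofR cpx)).mul cG))))
  -- support facts
  have hvA1 := Dv_vanish hK.isClosed hsupp vX
  have hvA2 := Dv_vanish hK.isClosed hvA1 vX
  have hvA3 := Dv_vanish hK.isClosed hvA2 vX
  have hvB1 := Dv_vanish hK.isClosed hsupp vY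
  have hvB2 := Dv_vanish hK.isClosed hvB1 vY
  have hvB3 := Dv_vanish hK.isClosed hvB2 vY
  have hvT := Dv_vanish hK.isClosed hsupp vT
  have hvW : ∀ t z, z ∉ K → Wf G (t, z) = 0 := by
    intro t z hz; simp [Wf, hsupp t z hz]
  have hvPX : ∀ t z, z ∉ K → PX q G (t, z) = 0 := by
    intro t z hz; simp [PX, hsupp t z hz]
  have hvPY : ∀ t z, z ∉ K → PY p G (t, z) = 0 := by
    intro t z hz; simp [PY, hsupp t z hz]
  have hvFX : ∀ t z, z ∉ K → FX q G (t, z) = 0 := by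
    intro t z hz; simp [FX, hsupp t z hz, hvA1 t z hz]
  have hvFY : ∀ t z, z ∉ K → FY p G (t, z) = 0 := by
    intro t z hz; simp [FY, hsupp t z hz, hvB1 t z hz]
  -- integrability helper
  have hint : ∀ (h : ℝ×(ℝ×ℝ) → ℝ), Continuous h → (∀ t z, z ∉ K → h (t,z) = 0) →
      ∀ t : ℝ, Integrable (fun z : ℝ×ℝ => h (t,z)) volume := by
    intro h ch hsupph t
    exact (ch.comp (Continuous.prodMk_right t)).integrable_of_hasCompactSupport
      (HasCompactSupport.intro hK fun z hz => hsupph t z hz)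
  -- geometry of K
  obtain ⟨r, hr⟩ := hK.isBounded.subset_closedBall 0
  have hnotK1 : ∀ x y : ℝ, x ∉ Set.Ioo (-(r+1)) (r+1) → ((x,y) : ℝ×ℝ) ∉ K := by
    intro x y hx hmem
    apply hx
    have h1 : ‖((x,y) : ℝ×ℝ)‖ ≤ r := by simpa using hr hmem
    have h2 : |x| ≤ r := le_trans (norm_fst_le ((x,y) : ℝ×ℝ)) h1
    rw [abs_le] at h2
    constructor <;> [linarith [h2.1]; linarith [h2.2]]
  have hnotK2 : ∀ x y : ℝ, y ∉ Set.Ioo (-(r+1)) (r+1) → ((x,y) : ℝ×ℝ) ∉ K := by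
    intro x y hy hmem
    apply hy
    have h1 : ‖((x,y) : ℝ×ℝ)‖ ≤ r := by simpa using hr hmem
    have h2 : |y| ≤ r := le_trans (norm_snd_le ((x,y) : ℝ×ℝ)) h1
    rw [abs_le] at h2
    constructor <;> [linarith [h2.1]; linarith [h2.2]]
  -- row and column integrals vanish
  have intPX : ∀ t : ℝ, ∫ z : ℝ×ℝ, PX q G (t,z) = 0 := by
    intro t
    have hI : Integrable (fun z : ℝ×ℝ => PX q G (t,z)) ((volume : Measure ℝ).prod volume) := by
      have := hint (PX q G) cPX hvPX t
      rwa [MeasureTheory.Measure.volume_eq_prod ℝ ℝ] at this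
    rw [show (volume : Measure (ℝ×ℝ)) = (volume : Measure ℝ).prod volume from
      MeasureTheory.Measure.volume_eq_prod ℝ ℝ]
    rw [MeasureTheory.integral_prod_symm _ hI]
    have hinner : ∀ y : ℝ, ∫ x : ℝ, PX q G (t,(x,y)) = 0 := by
      intro y
      refine integral_deriv_zero (h := fun x => FX q G (t,(x,y)))
        (a := -(r+1)) (b := r+1)
        (fun x => hasDerivAt_FX hsm hq t x y) ?_ ?_ ?_
      · exact cPX.comp ((Continuous.prodMk_right t).comp ((continuous_id.prodMk continuous_const)))
      · intro x hx; exact hvFX t (x,y) (hnotK1 x y hx)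
      · intro x hx; exact hvPX t (x,y) (hnotK1 x y hx)
    simp [hinner]
  have intPY : ∀ t : ℝ, ∫ z : ℝ×ℝ, PY p G (t,z) = 0 := by
    intro t
    have hI : Integrable (fun z : ℝ×ℝ => PY p G (t,z)) ((volume : Measure ℝ).prod volume) := by
      have := hint (PY p G) cPY hvPY t
      rwa [MeasureTheory.Measure.volume_eq_prod ℝ ℝ] at this
    rw [show (volume : Measure (ℝ×ℝ)) = (volume : Measure ℝ).prod volume from
      MeasureTheory.Measure.volume_eq_prod ℝ ℝ]
    rw [MeasureTheory.integral_prod _ hI]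
    have hinner : ∀ x : ℝ, ∫ y : ℝ, PY p G (t,(x,y)) = 0 := by
      intro x
      refine integral_deriv_zero (h := fun y => FY p G (t,(x,y)))
        (a := -(r+1)) (b := r+1)
        (fun y => hasDerivAt_FY hsm hp t x y) ?_ ?_ ?_
      · exact cPY.comp ((Continuous.prodMk_right t).comp ((continuous_const.prodMk continuous_id)))
      · intro y hy; exact hvFY t (x,y) (hnotK2 x y hy)
      · intro y hy; exact hvPY t (x,y) (hnotK2 x y hy)
    simp [hinner]
  -- the divergence identity
  have hWPP : ∀ w : ℝ × (ℝ × ℝ), Wf G w = PX q G w + PY p G w := by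
    intro w
    simp only [Wf, PX, PY, hpde w]
    simp only [mul_add, Complex.add_re]
    ring
  have intW : ∀ t : ℝ, ∫ z : ℝ×ℝ, Wf G (t,z) = 0 := by
    intro t
    have : (fun z : ℝ×ℝ => Wf G (t,z)) = fun z => PX q G (t,z) + PY p G (t,z) := by
      funext z; exact hWPP (t,z)
    rw [this, MeasureTheory.integral_add (hint _ cPX hvPX t) (hint _ cPY hvPY t),
      intPX t, intPY t, add_zero]
  have cns : ∀ t : ℝ, Continuous (fun z : ℝ×ℝ => Complex.normSq (G (t,z))) := fun t =>
    Complex.continuous_normSq.comp (cG.comp (Continuous.prodMk_right t))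
  have hnsInt : ∀ t : ℝ, Integrable (fun z : ℝ×ℝ => Complex.normSq (G (t,z))) volume := by
    intro t
    refine (cns t).integrable_of_hasCompactSupport (HasCompactSupport.intro hK ?_)
    intro z hz
    simp [hsupp t z hz]
  -- the energy
  set E : ℝ → ℝ := fun t => ∫ z : ℝ×ℝ, Complex.normSq (G (t,z)) with hE
  have hEderiv : ∀ t₀ : ℝ, HasDerivAt E 0 t₀ := by
    intro t₀
    have hcomp : IsCompact ((Set.Icc (t₀-1) (t₀+1)) ×ˢ K) := isCompact_Icc.prod hK
    obtain ⟨M, hM⟩ := hcomp.exists_bound_of_continuousOn cW.continuousOn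
    have main := hasDerivAt_integral_of_dominated_loc_of_deriv_le
      (F := fun t (z : ℝ×ℝ) => Complex.normSq (G (t,z)))
      (F' := fun t (z : ℝ×ℝ) => Wf G (t,z))
      (x₀ := t₀) (bound := K.indicator (fun _ => M)) (s := Metric.ball t₀ 1) (Metric.ball_mem_nhds t₀ one_pos)
      (Filter.Eventually.of_forall fun t => (cns t).aestronglyMeasurable)
      (hnsInt t₀)
      ((cW.comp (Continuous.prodMk_right t₀)).aestronglyMeasurable)
      (Filter.Eventually.of_forall ?_)
      ?_
      (Filter.Eventually.of_forall ?_)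
    · have := main.2
      rwa [intW t₀] at this
    · intro z t ht
      by_cases hz : z ∈ K
      · rw [Set.indicator_of_mem hz]
        have hmem : ((t,z) : ℝ×(ℝ×ℝ)) ∈ (Set.Icc (t₀-1) (t₀+1)) ×ˢ K := by
          refine ⟨?_, hz⟩
          have := Metric.mem_ball.1 ht
          rw [Real.dist_eq, abs_lt] at this
          constructor <;> simp <;> linarith [this.1, this.2]
        exact hM (t,z) hmem
      · rw [Set.indicator_of_notMem hz]
        simp [hvW t z hz]
    · rw [integrable_indicator_iff hK.measurableSet]
      exact integrableOn_const hK.measure_lt_top.ne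
    · rintro ⟨zx, zy⟩ t ht
      exact hasDerivAt_nsqT hsm t zx zy
  -- E is constant, hence zero
  have hEconst : ∀ t : ℝ, E t = E 0 := fun t =>
    is_const_of_deriv_eq_zero (fun s => (hEderiv s).differentiableAt)
      (fun s => (hEderiv s).deriv) t 0
  have hE0 : E 0 = 0 := by
    simp only [hE]
    have : (fun z : ℝ×ℝ => Complex.normSq (G (0,z))) = fun _ => 0 := by
      funext z; simp [h0 z]
    rw [this]; simp
  -- conclude pointwise vanishing
  intro t z
  have hnn : ∀ z : ℝ×ℝ, 0 ≤ Complex.normSq (G (t,z)) := fun z => Complex.normSq_nonneg _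
  have hIt : Integrable (fun z : ℝ×ℝ => Complex.normSq (G (t,z))) volume := hnsInt t
  have hzero : ∫ z : ℝ×ℝ, Complex.normSq (G (t,z)) = 0 := by
    have := hEconst t
    rw [hE0] at this
    exact this
  have hae : (fun z : ℝ×ℝ => Complex.normSq (G (t,z))) =ᵐ[volume] 0 :=
    (integral_eq_zero_iff_of_nonneg hnn hIt).1 hzero
  have heq : (fun z : ℝ×ℝ => Complex.normSq (G (t,z))) = fun _ => 0 :=
    (Continuous.ae_eq_iff_eq volume (cns t) continuous_const).1 hae
  have := congrFun heq z
  simpa [Complex.normSq_eq_zero] using this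

/-- Uniqueness part of Theorem 2.2: two smooth, compactly supported (in `(x,y)`,
uniformly in `t`) solutions of equation (2.10) with the same initial data coincide. -/
theorem uniqueness_for_evolution_2_10
    (p q : ℝ × ℝ → ℝ) (hp : ContDiff ℝ 1 p) (hq : ContDiff ℝ 1 q)
    (f₁ f₂ : ℝ → ℝ × ℝ → ℂ)
    (hf₁ : IsSolution_2_10 p q f₁) (hf₂ : IsSolution_2_10 p q f₂)
    (h0 : ∀ z : ℝ × ℝ, f₁ 0 z = f₂ 0 z) :
    ∀ t : ℝ, ∀ z : ℝ × ℝ, f₁ t z = f₂ t z := by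
  obtain ⟨hsm₁, ⟨K₁, hK₁, hsupp₁⟩, hpde₁⟩ := hf₁
  obtain ⟨hsm₂, ⟨K₂, hK₂, hsupp₂⟩, hpde₂⟩ := hf₂
  set G₁ := (fun w : ℝ × (ℝ × ℝ) => f₁ w.1 w.2) with hG₁
  set G₂ := (fun w : ℝ × (ℝ × ℝ) => f₂ w.1 w.2) with hG₂
  set G := (fun w : ℝ × (ℝ × ℝ) => G₁ w - G₂ w) with hGdef
  have hsm : ContDiff ℝ (⊤ : ℕ∞) G := hsm₁.sub hsm₂
  have hK : IsCompact (K₁ ∪ K₂) := hK₁.union hK₂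
  have hsupp : ∀ t : ℝ, ∀ z : ℝ × ℝ, z ∉ K₁ ∪ K₂ → G (t, z) = 0 := by
    intro t z hz
    simp only [hGdef, hG₁, hG₂]
    rw [hsupp₁ t z (fun h => hz (Or.inl h)), hsupp₂ t z (fun h => hz (Or.inr h)), sub_zero]
  have h0' : ∀ z : ℝ × ℝ, G (0, z) = 0 := by
    intro z
    simp only [hGdef, hG₁, hG₂]
    rw [h0 z, sub_self]
  -- PDE for the difference
  have e₁ := sol_translate hp hq ⟨hsm₁, ⟨K₁, hK₁, hsupp₁⟩, hpde₁⟩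
  have e₂ := sol_translate hp hq ⟨hsm₂, ⟨K₂, hK₂, hsupp₂⟩, hpde₂⟩
  have hsubT : Dv vT G = fun w => Dv vT G₁ w - Dv vT G₂ w := Dv_sub hsm₁ hsm₂ vT
  have hsubX1 : Dv vX G = fun w => Dv vX G₁ w - Dv vX G₂ w := Dv_sub hsm₁ hsm₂ vX
  have hsubX2 : Dv vX (Dv vX G) = fun w => Dv vX (Dv vX G₁) w - Dv vX (Dv vX G₂) w := by
    rw [hsubX1]; exact Dv_sub (Dv_contDiff hsm₁ vX) (Dv_contDiff hsm₂ vX) vX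
  have hsubX3 : Dv vX (Dv vX (Dv vX G))
      = fun w => Dv vX (Dv vX (Dv vX G₁)) w - Dv vX (Dv vX (Dv vX G₂)) w := by
    rw [hsubX2]
    exact Dv_sub (Dv_contDiff (Dv_contDiff hsm₁ vX) vX)
      (Dv_contDiff (Dv_contDiff hsm₂ vX) vX) vX
  have hsubY1 : Dv vY G = fun w => Dv vY G₁ w - Dv vY G₂ w := Dv_sub hsm₁ hsm₂ vY
  have hsubY2 : Dv vY (Dv vY G) = fun w => Dv vY (Dv vY G₁) w - Dv vY (Dv vY G₂) w := by
    rw [hsubY1]; exact Dv_sub (Dv_contDiff hsm₁ vY) (Dv_contDiff hsm₂ vY) vY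
  have hsubY3 : Dv vY (Dv vY (Dv vY G))
      = fun w => Dv vY (Dv vY (Dv vY G₁)) w - Dv vY (Dv vY (Dv vY G₂)) w := by
    rw [hsubY2]
    exact Dv_sub (Dv_contDiff (Dv_contDiff hsm₁ vY) vY)
      (Dv_contDiff (Dv_contDiff hsm₂ vY) vY) vY
  have hpde : ∀ w : ℝ × (ℝ × ℝ),
      Dv vT G w = Dv vX (Dv vX (Dv vX G)) w + Dv vY (Dv vY (Dv vY G)) w
        + (q (w.2.1, w.1) : ℂ) * Dv vX G w
        + (1 / 2 : ℂ) * ((fderiv ℝ q (w.2.1, w.1) (1,0) : ℝ) : ℂ) * G w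
        + (p (w.2.2, w.1) : ℂ) * Dv vY G w
        + (1 / 2 : ℂ) * ((fderiv ℝ p (w.2.2, w.1) (1,0) : ℝ) : ℂ) * G w := by
    intro w
    rw [hsubT, hsubX3, hsubY3, hsubX1, hsubY1]
    simp only [hGdef]
    rw [e₁ w, e₂ w]
    ring
  have := key hp hq hsm hK hsupp hpde h0'
  intro t z
  have h := this t z
  simp only [hGdef, hG₁, hG₂] at h
  exact sub_eq_zero.1 h
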